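/- The first-order part of the thin set problem TS¹₃ is uniformly computably true. -/

import Mathlib

open Classical

/-- A Turing functional, presented by a monotone computable map on finite prefixes
of the oracle. -/
structure Functional where
  eval : List ℕ → ℕ → Option ℕ
  mono : ∀ σ τ x y, σ <+: τ → eval σ x = some y → eval τ x = some y
  comp : Computable₂ eval

/-- The finite initial segment of `f` of length `k`. -/
def initSeg (f : ℕ → ℕ) (k : ℕ) : List ℕ := (List.range k).map f

/-- `Φ(f)(x)` converges with value `y`. -/
def Functional.conv (Φ : Functional) (f : ℕ → ℕ) (x y : ℕ) : Prop :=
  ∃ k, Φ.eval (initSeg f k) x = some y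

/-- Total application: `Φ(f) = g`. -/
def Functional.Total (Φ : Functional) (f g : ℕ → ℕ) : Prop :=
  ∀ x, Φ.conv f x (g x)

/-- The Turing join of two elements of Baire space. -/
def join (f g : ℕ → ℕ) : ℕ → ℕ := fun n => if n % 2 = 0 then f (n / 2) else g (n / 2)

/-- The embedding of `ℕ` into Baire space: `n` is identified with `n,0,0,0,…`. -/
def natSeq (n : ℕ) : ℕ → ℕ := fun i => if i = 0 then n else 0

/-- A problem: a partial multifunction on Baire space, given by its domain
(the set of instances) and, for each instance, its set of solutions. -/
structure Problem where
  dom : Set (ℕ → ℕ)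
  sol : (ℕ → ℕ) → Set (ℕ → ℕ)

/-- Weihrauch reducibility `Q ≤_W P`. -/
def WRed (Q P : Problem) : Prop :=
  ∃ Φ Ψ : Functional, ∀ f ∈ Q.dom, ∃ h, Φ.Total f h ∧ h ∈ P.dom ∧
    ∀ g ∈ P.sol h, ∃ y, Ψ.Total (join f g) y ∧ y ∈ Q.sol f

/-- Strong Weihrauch reducibility `Q ≤_sW P`: the backward functional only sees the solution. -/
def SRed (Q P : Problem) : Prop :=
  ∃ Φ Ψ : Functional, ∀ f ∈ Q.dom, ∃ h, Φ.Total f h ∧ h ∈ P.dom ∧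
    ∀ g ∈ P.sol h, ∃ y, Ψ.Total g y ∧ y ∈ Q.sol f

/-- Weihrauch equivalence. -/
def WEquiv (Q P : Problem) : Prop := WRed Q P ∧ WRed P Q

/-- Strong Weihrauch equivalence. -/
def SEquiv (Q P : Problem) : Prop := SRed Q P ∧ SRed P Q

/-- A problem is first-order if all its solutions are natural numbers
(under the identification of `n` with `natSeq n`). -/
def FirstOrder (P : Problem) : Prop :=
  ∀ f ∈ P.dom, ∀ g ∈ P.sol f, ∃ n, g = natSeq n

/-- The code of a functional as an element of Baire space (the graph of its
prefix-evaluation function). -/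
def Functional.graph (Φ : Functional) : ℕ → ℕ :=
  fun n => Encodable.encode (Φ.eval (Denumerable.ofNat (List ℕ) n.unpair.1) n.unpair.2)

/-- The first-order part `¹P` of a problem `P`: instances are (codes of) triples
`⟨f,Φ,Ψ⟩` with `Φ(f) ∈ dom(P)` and `Ψ(f,g)(0)↓` for all `g ∈ P(Φ(f))`; the
solutions are all values `Ψ(f,g)(0)` for `g ∈ P(Φ(f))`. -/
def FOPart (P : Problem) : Problem where
  dom := { h | ∃ (f : ℕ → ℕ) (Φ Ψ : Functional), h = join f (join Φ.graph Ψ.graph) ∧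
    ∃ p, Φ.Total f p ∧ p ∈ P.dom ∧ ∀ g ∈ P.sol p, ∃ y, Ψ.conv (join f g) 0 y }
  sol h := { w | ∃ (f : ℕ → ℕ) (Φ Ψ : Functional) (p g : ℕ → ℕ) (y : ℕ),
    h = join f (join Φ.graph Ψ.graph) ∧ Φ.Total f p ∧ p ∈ P.dom ∧ g ∈ P.sol p ∧
    Ψ.conv (join f g) 0 y ∧ w = natSeq y }

/-- `P` is computably true: every instance computes one of its solutions. -/
def ComputablyTrue (P : Problem) : Prop :=
  ∀ f ∈ P.dom, ∃ g ∈ P.sol f, ∃ Φ : Functional, Φ.Total f g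

/-- `P` is uniformly computably true: a single functional solves every instance. -/
def UnifCompTrue (P : Problem) : Prop :=
  ∃ Φ : Functional, ∀ f ∈ P.dom, ∃ g, Φ.Total f g ∧ g ∈ P.sol f

/-- `σ` is a finite initial segment of some `P`-solution to `f`. -/
def Extendible (P : Problem) (f : ℕ → ℕ) (σ : List ℕ) : Prop :=
  ∃ g ∈ P.sol f, σ = initSeg g σ.length

/-- `P` is undiagonalizable: the set of strings extendible to a solution is
uniformly decidable from the instance. -/
def Undiag (P : Problem) : Prop :=
  ∃ Γ : Functional, ∀ f ∈ P.dom, ∀ σ : List ℕ,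
    (Extendible P f σ → Γ.conv f (Encodable.encode σ) 1) ∧
    (¬ Extendible P f σ → Γ.conv f (Encodable.encode σ) 0)

/-- The thin set problem `TS¹₃`: instances are colorings `c : ℕ → 3`; solutions
are (characteristic functions of) infinite sets on which `c` takes at most two values. -/
def TS13 : Problem where
  dom := { c | ∀ x, c x < 3 }
  sol c := { h | (∀ x, h x ≤ 1) ∧ {x | h x = 1}.Infinite ∧
    ∃ a b, ∀ x, h x = 1 → c x = a ∨ c x = b }

/-!
The solver searches the instance `⟨f, Φ, Ψ⟩` for a finite binary string `σ` whose `1`-positions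
all receive one colour under `c = Φ(f)` and for which `Ψ(f ⊕ σ)(0)` converges, and outputs that
value. Both conditions can be checked on a finite prefix of the instance, since it carries the
graphs of `Φ` and `Ψ` on finite strings. A suitable `σ` exists: `c` has an infinite colour class,
its characteristic function is a solution, and by continuity `Ψ` converges on one of its initial
segments. Conversely every value found is a solution value: the monochromatic set `σ` extends to
an infinite thin set by adding an infinite colour class beyond `|σ|`, and `Ψ` gives the same
value on the extension.
-/

open Encodable

@[simp]
theorem length_initSeg (f : ℕ → ℕ) (k : ℕ) : (initSeg f k).length = k := by
  simp [initSeg]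

theorem getD_initSeg (f : ℕ → ℕ) (k i : ℕ) :
    (initSeg f k).getD i 0 = if i < k then f i else 0 := by
  split_ifs with h <;> simp [initSeg, List.getD_eq_getElem?_getD, h]

theorem eq_succ_of_getD_initSeg_eq_succ {f : ℕ → ℕ} {k i v : ℕ}
    (h : (initSeg f k).getD i 0 = v + 1) : f i = v + 1 := by
  rw [getD_initSeg] at h
  split_ifs at h
  exact h

theorem initSeg_congr {f g : ℕ → ℕ} {k : ℕ} (h : ∀ i < k, f i = g i) :
    initSeg f k = initSeg g k :=
  List.map_congr_left fun i hi => h i (List.mem_range.1 hi)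

theorem take_initSeg (f : ℕ → ℕ) {k m : ℕ} (h : k ≤ m) : (initSeg f m).take k = initSeg f k := by
  simp [initSeg, ← List.map_take, List.take_range, Nat.min_eq_left h]

theorem initSeg_prefix (f : ℕ → ℕ) {k m : ℕ} (h : k ≤ m) : initSeg f k <+: initSeg f m :=
  take_initSeg f h ▸ List.take_prefix _ _

@[simp]
theorem join_two_mul (f g : ℕ → ℕ) (t : ℕ) : join f g (2 * t) = f t := by
  simp [join]

@[simp]
theorem join_two_mul_add_one (f g : ℕ → ℕ) (t : ℕ) : join f g (2 * t + 1) = g t := by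
  simp [join, Nat.add_mod, Nat.add_div]

theorem join_congr {f f' g g' : ℕ → ℕ} {k : ℕ} (hf : ∀ t < k, f t = f' t)
    (hg : ∀ t < k, g t = g' t) : ∀ i < 2 * k, join f g i = join f' g' i := by
  intro i hi
  obtain ⟨t, rfl | rfl⟩ := Nat.even_or_odd' i
  · simpa using hf t (by omega)
  · simpa using hg t (by omega)

namespace Functional

theorem eval_initSeg_of_le {Φ : Functional} {f : ℕ → ℕ} {x y k m : ℕ}
    (h : Φ.eval (initSeg f k) x = some y) (hkm : k ≤ m) : Φ.eval (initSeg f m) x = some y :=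
  Φ.mono _ _ _ _ (initSeg_prefix f hkm) h

theorem conv_unique {Φ : Functional} {f : ℕ → ℕ} {x y y' : ℕ}
    (h : Φ.conv f x y) (h' : Φ.conv f x y') : y = y' := by
  obtain ⟨k, hk⟩ := h
  obtain ⟨k', hk'⟩ := h'
  exact Option.some.inj <| (eval_initSeg_of_le hk (le_max_left k k')).symm.trans
    (eval_initSeg_of_le hk' (le_max_right k k'))

theorem Total.exists_initSeg {Φ : Functional} {f g : ℕ → ℕ} (h : Φ.Total f g) (n : ℕ) :
    ∃ k, ∀ i < n, Φ.eval (initSeg f k) i = some (g i) := by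
  induction n with
  | zero => exact ⟨0, by simp⟩
  | succ n ih =>
    obtain ⟨k, hk⟩ := ih
    obtain ⟨k', hk'⟩ := h n
    refine ⟨max k k', fun i hi => ?_⟩
    rcases Nat.lt_succ_iff_lt_or_eq.1 hi with hi | rfl
    · exact eval_initSeg_of_le (hk i hi) (le_max_left _ _)
    · exact eval_initSeg_of_le hk' (le_max_right _ _)

theorem graph_pair (Φ : Functional) (σ : List ℕ) (x : ℕ) :
    Φ.graph (Nat.pair (encode σ) x) = encode (Φ.eval σ x) := by
  simp [graph]

theorem graph_pair_eq_succ_iff {Φ : Functional} {σ : List ℕ} {x y : ℕ} :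
    Φ.graph (Nat.pair (encode σ) x) = y + 1 ↔ Φ.eval σ x = some y := by
  rw [graph_pair]
  cases Φ.eval σ x <;> simp

end Functional

theorem List.findSome?_congr {α β : Type*} {l : List α} {f g : α → Option β}
    (h : ∀ a ∈ l, f a = g a) : l.findSome? f = l.findSome? g := by
  induction l with
  | nil => rfl
  | cons a l ih =>
    simp only [List.findSome?_cons, h a List.mem_cons_self,
      ih fun b hb => h b (List.mem_cons_of_mem a hb)]

section Search

variable {α : Type*} [Primcodable α]

/- Stage `n = ⟨m, w⟩` checks the witness `w` against the first `m` entries of the oracle. Since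
`m ≤ n`, the stages up to `|τ|` only see `τ`, so the first success is stable under extension. -/
def searchEval (c : List ℕ → α → Option ℕ) (τ : List ℕ) : Option ℕ :=
  (List.range (τ.length + 1)).findSome? fun n => (decode n.unpair.2).bind (c (τ.take n.unpair.1))

theorem searchEval_append {c : List ℕ → α → Option ℕ} {σ : List ℕ} {y : ℕ}
    (h : searchEval c σ = some y) (δ : List ℕ) : searchEval c (σ ++ δ) = some y := by
  have hstable : ∀ n ∈ List.range (σ.length + 1), (σ ++ δ).take n.unpair.1 = σ.take n.unpair.1 :=
    fun n hn => List.take_append_of_le_length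
      ((Nat.unpair_left_le n).trans (Nat.lt_succ_iff.1 (List.mem_range.1 hn)))
  rw [searchEval, List.length_append, Nat.add_right_comm, List.range_add, List.findSome?_append,
    List.findSome?_congr fun n hn => by rw [hstable n hn]]
  rw [searchEval] at h
  rw [h, Option.some_or]

theorem exists_of_searchEval_eq_some {c : List ℕ → α → Option ℕ} {τ : List ℕ} {y : ℕ}
    (h : searchEval c τ = some y) : ∃ m ≤ τ.length, ∃ w, c (τ.take m) w = some y := by
  obtain ⟨n, hn, hcn⟩ := List.exists_of_findSome?_eq_some h
  obtain ⟨w, -, hw⟩ := Option.bind_eq_some_iff.1 hcn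
  exact ⟨_, (Nat.unpair_left_le n).trans (Nat.lt_succ_iff.1 (List.mem_range.1 hn)), w, hw⟩

theorem searchEval_initSeg_isSome {c : List ℕ → α → Option ℕ} {h : ℕ → ℕ} {m : ℕ} {w : α} {y : ℕ}
    (hw : c (initSeg h m) w = some y) :
    (searchEval c (initSeg h (Nat.pair m (encode w)))).isSome := by
  rw [searchEval, List.findSome?_isSome_iff]
  refine ⟨Nat.pair m (encode w), List.mem_range.2 (by simp), ?_⟩
  simp [encodek, take_initSeg h (Nat.left_le_pair m _), hw]

theorem primrec_searchEval {c : List ℕ → α → Option ℕ} (hc : Primrec₂ c) :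
    Primrec (searchEval c) := by
  open Primrec in
  have hstage : Primrec₂ fun (p : List ℕ × ℕ) (w : α) => c (p.1.take p.2.unpair.1) w :=
    hc.comp (list_take.comp (fst.comp (unpair.comp (snd.comp fst))) (fst.comp fst)) snd
  refine (list_head?.comp (listFilterMap (list_range.comp (succ.comp list_length))
    (option_bind (Primrec.decode.comp (snd.comp (unpair.comp snd))) hstage).to₂)).of_eq fun τ => ?_
  simp [searchEval]

def searchFunctional (c : List ℕ → α → Option ℕ) (hc : Primrec₂ c) : Functional where
  eval τ x := (searchEval c τ).map (natSeq · x)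
  mono σ τ x y := by
    rintro ⟨δ, rfl⟩ h
    obtain ⟨z, hz, rfl⟩ := Option.map_eq_some_iff.1 h
    rw [searchEval_append hz]
    rfl
  comp := by
    have hnatSeq : Primrec₂ natSeq := Primrec.ite (Primrec.eq.comp .snd (.const 0)) .fst (.const 0)
    exact (Primrec.option_map ((primrec_searchEval hc).comp .fst)
      (hnatSeq.comp .snd (Primrec.snd.comp .fst)).to₂).to_comp

theorem searchFunctional_total {c : List ℕ → α → Option ℕ} (hc : Primrec₂ c) {h : ℕ → ℕ}
    {m : ℕ} {w : α} {y : ℕ} (hw : c (initSeg h m) w = some y) :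
    ∃ m' w' y', c (initSeg h m') w' = some y' ∧ (searchFunctional c hc).Total h (natSeq y') := by
  obtain ⟨y', hy'⟩ := Option.isSome_iff_exists.1 (searchEval_initSeg_isSome hw)
  obtain ⟨m', hm', w', hc'⟩ := exists_of_searchEval_eq_some hy'
  rw [length_initSeg] at hm'
  rw [take_initSeg h hm'] at hc'
  exact ⟨m', w', y', hc', fun x => ⟨Nat.pair m (encode w), by simp [searchFunctional, hy']⟩⟩

end Search

section Primrec

open Primrec

variable {α : Type*} [Primcodable α]

theorem primrec_initSeg {f : α → ℕ → ℕ} {k : α → ℕ} (hf : Primrec₂ f) (hk : Primrec k) :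
    Primrec fun a => initSeg (f a) (k a) :=
  list_map (list_range.comp hk) hf

theorem primrec₂_join {f g : α → ℕ → ℕ} (hf : Primrec₂ f) (hg : Primrec₂ g) :
    Primrec₂ fun a => join (f a) (g a) :=
  Primrec.ite (Primrec.eq.comp (nat_mod.comp snd (const 2)) (const 0))
    (hf.comp fst (nat_div.comp snd (const 2))) (hg.comp fst (nat_div.comp snd (const 2)))

end Primrec

theorem exists_infinite_fiber_of_lt {p : ℕ → ℕ} {n : ℕ} (hp : ∀ x, p x < n) :
    ∃ a, {x | p x = a}.Infinite := by
  by_contra! hfin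
  refine Set.infinite_univ (((Set.finite_Iio n).biUnion fun a _ => hfin a).subset fun x _ => ?_)
  simpa using hp x

namespace TS13

-- `σ` below its length, the indicator of the fibre `p⁻¹{b}` above it
def extendByFiber (σ : List Bool) (p : ℕ → ℕ) (b : ℕ) (t : ℕ) : ℕ :=
  (σ.getD t (decide (p t = b))).toNat

theorem extendByFiber_mem_sol {σ : List Bool} {p : ℕ → ℕ} {a b : ℕ}
    (hσ : ∀ i, σ.getD i false = true → p i = a) (hb : {x | p x = b}.Infinite) :
    extendByFiber σ p b ∈ TS13.sol p := by
  have hfar : ∀ x, σ.length ≤ x → extendByFiber σ p b x = (decide (p x = b)).toNat :=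
    fun x hx => by rw [extendByFiber, List.getD_eq_default _ _ hx]
  refine ⟨fun x => Bool.toNat_le _, ?_, a, b, fun x hx => ?_⟩
  · refine (hb.sdiff (Set.finite_lt_nat σ.length)).mono fun x hx => ?_
    simp_all [hfar x (not_lt.1 hx.2)]
  · rcases lt_or_ge x σ.length with hx' | hx'
    · left
      refine hσ x ?_
      rwa [extendByFiber, List.getD_eq_getElem _ _ hx', Bool.toNat_eq_one,
        ← List.getD_eq_getElem _ false hx'] at hx
    · right
      simpa [hfar x hx'] using hx

/- A prefix `ρ` of the instance `join f (join Φ.graph Ψ.graph)` is read with `0` beyond its end,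
which is harmless as a graph entry `0` means divergence: `evens ρ` approximates `f`,
`colourQuery ρ k i` is the entry of `Φ.graph` at `⟨f↾k, i⟩` and `outputQuery ρ σ` the entry of
`Ψ.graph` at `⟨f ⊕ σ, 0⟩`. The witness `(σ, k, a)` claims that `Φ(f↾k)` colours every
`1`-position of `σ` with `a`. -/
def evens (ρ : List ℕ) (t : ℕ) : ℕ := ρ.getD (2 * t) 0

def bits (σ : List Bool) (t : ℕ) : ℕ := (σ.getD t false).toNat

def colourQuery (ρ : List ℕ) (k i : ℕ) : ℕ :=
  ρ.getD (2 * (2 * Nat.pair (encode (initSeg (evens ρ) k)) i) + 1) 0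

def outputQuery (ρ : List ℕ) (σ : List Bool) : ℕ :=
  ρ.getD
    (2 * (2 * Nat.pair (encode (initSeg (join (evens ρ) (bits σ)) (2 * σ.length))) 0 + 1) + 1) 0

def certify (ρ : List ℕ) : List Bool × ℕ × ℕ → Option ℕ
  | (σ, k, a) =>
    if 2 * k ≤ ρ.length ∧ 2 * σ.length ≤ ρ.length ∧ outputQuery ρ σ ≠ 0 ∧
        ∀ i < σ.length, σ.getD i false = true → colourQuery ρ k i = a + 1
    then some (outputQuery ρ σ - 1) else none

section Primrec

open Primrec

theorem primrec₂_evens : Primrec₂ evens :=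
  (list_getD 0).comp fst (nat_double.comp snd)

theorem primrec₂_bits : Primrec₂ bits :=
  (dom_bool Bool.toNat).comp (list_getD false)

theorem primrec_colourQuery : Primrec fun q : List ℕ × ℕ × ℕ => colourQuery q.1 q.2.1 q.2.2 :=
  (list_getD 0).comp fst (nat_double_succ.comp (nat_double.comp (Primrec₂.natPair.comp
    (Primrec.encode.comp (primrec_initSeg (primrec₂_evens.comp (fst.comp fst) snd).to₂
      (fst.comp snd))) (snd.comp snd))))

theorem primrec₂_outputQuery : Primrec₂ outputQuery :=
  (list_getD 0).comp fst (nat_double_succ.comp (nat_double_succ.comp (Primrec₂.natPair.comp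
    (Primrec.encode.comp (primrec_initSeg
      (primrec₂_join (primrec₂_evens.comp (fst.comp fst) snd).to₂
        (primrec₂_bits.comp (snd.comp fst) snd).to₂)
      (nat_double.comp (list_length.comp snd)))) (const 0))))

theorem primrec₂_certify : Primrec₂ certify := by
  have hρ : Primrec fun p : List ℕ × List Bool × ℕ × ℕ => p.1 := fst
  have hσ : Primrec fun p : List ℕ × List Bool × ℕ × ℕ => p.2.1 := fst.comp snd
  have hk : Primrec fun p : List ℕ × List Bool × ℕ × ℕ => p.2.2.1 := fst.comp (snd.comp snd)
  have ha : Primrec fun p : List ℕ × List Bool × ℕ × ℕ => p.2.2.2 := snd.comp (snd.comp snd)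
  have houtput := primrec₂_outputQuery.comp hρ hσ
  have hcolour : PrimrecRel fun i (p : List ℕ × List Bool × ℕ × ℕ) =>
      p.2.1.getD i false = true → colourQuery p.1 p.2.2.1 i = p.2.2.2 + 1 :=
    (PrimrecPred.or (Primrec.eq.comp ((list_getD false).comp (hσ.comp snd) fst) (const true)).not
      (Primrec.eq.comp (primrec_colourQuery.comp (pair (hρ.comp snd) (pair (hk.comp snd) fst)))
        (nat_add.comp (ha.comp snd) (const 1)))).of_eq
      fun _ => imp_iff_not_or.symm
  have hall : PrimrecPred fun p : List ℕ × List Bool × ℕ × ℕ => ∀ i < p.2.1.length,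
      p.2.1.getD i false = true → colourQuery p.1 p.2.2.1 i = p.2.2.2 + 1 :=
    (hcolour.forall_mem_list.comp (list_range.comp (list_length.comp hσ)) .id).of_eq
      fun _ => by simp only [List.mem_range, id]
  have hcert := (nat_le.comp (nat_double.comp hk) (list_length.comp hρ)).and <|
    (nat_le.comp (nat_double.comp (list_length.comp hσ)) (list_length.comp hρ)).and <|
    (Primrec.eq.comp houtput (const 0)).not.and hall
  exact (Primrec.ite hcert (option_some.comp (nat_sub.comp houtput (const 1))) (const none)).of_eq
    fun _ => rfl

end Primrec

theorem evens_initSeg_join {f g : ℕ → ℕ} {m t : ℕ} (h : 2 * t < m) :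
    evens (initSeg (join f g) m) t = f t := by
  rw [evens, getD_initSeg, if_pos h, join_two_mul]

theorem initSeg_evens_initSeg_join {f g : ℕ → ℕ} {m k : ℕ} (h : 2 * k ≤ m) :
    initSeg (evens (initSeg (join f g) m)) k = initSeg f k :=
  initSeg_congr fun _ ht => evens_initSeg_join (by omega)

theorem natSeq_mem_sol_of_certify {f p : ℕ → ℕ} {Φ Ψ : Functional} (hΦ : Φ.Total f p)
    (hp : p ∈ TS13.dom) {m y : ℕ} {w : List Bool × ℕ × ℕ}
    (hw : certify (initSeg (join f (join Φ.graph Ψ.graph)) m) w = some y) :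
    natSeq y ∈ (FOPart TS13).sol (join f (join Φ.graph Ψ.graph)) := by
  obtain ⟨σ, k, a⟩ := w
  simp only [certify, length_initSeg] at hw
  split_ifs at hw with hcert
  obtain ⟨hk, hσ, hv, hcol⟩ := hcert
  cases hw
  have hcolour : ∀ i, σ.getD i false = true → p i = a := by
    intro i hi
    have hil : i < σ.length := by
      by_contra! hil
      rw [List.getD_eq_default _ _ hil] at hi
      exact Bool.false_ne_true hi
    have hread := eq_succ_of_getD_initSeg_eq_succ (hcol i hil hi)
    rw [join_two_mul_add_one, join_two_mul, initSeg_evens_initSeg_join hk,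
      Functional.graph_pair_eq_succ_iff] at hread
    exact Functional.conv_unique (hΦ i) ⟨k, hread⟩
  obtain ⟨b, hb⟩ := exists_infinite_fiber_of_lt hp
  refine ⟨f, Φ, Ψ, p, extendByFiber σ p b, _, rfl, hΦ, hp, extendByFiber_mem_sol hcolour hb,
    ⟨2 * σ.length, ?_⟩, rfl⟩
  have hstring : initSeg (join (evens (initSeg (join f (join Φ.graph Ψ.graph)) m)) (bits σ))
      (2 * σ.length) = initSeg (join f (extendByFiber σ p b)) (2 * σ.length) := by
    refine initSeg_congr (join_congr (fun t ht => evens_initSeg_join (by omega)) fun t ht => ?_)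
    rw [bits, extendByFiber, List.getD_eq_getElem _ _ ht, List.getD_eq_getElem _ _ ht]
  obtain ⟨v, hread⟩ := Nat.exists_eq_succ_of_ne_zero hv
  rw [hread, Nat.succ_sub_one, ← Functional.graph_pair_eq_succ_iff, ← hstring]
  simpa using eq_succ_of_getD_initSeg_eq_succ hread

theorem exists_certify {f p : ℕ → ℕ} {Φ Ψ : Functional} (hΦ : Φ.Total f p) (hp : p ∈ TS13.dom)
    (hΨ : ∀ g ∈ TS13.sol p, ∃ y, Ψ.conv (join f g) 0 y) :
    ∃ m w y, certify (initSeg (join f (join Φ.graph Ψ.graph)) m) w = some y := by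
  obtain ⟨b, hb⟩ := exists_infinite_fiber_of_lt hp
  obtain ⟨y, L, hL⟩ := hΨ _ (extendByFiber_mem_sol (σ := []) (a := b) (by simp) hb)
  obtain ⟨K, hK⟩ := hΦ.exists_initSeg L
  set σ := (List.range L).map fun t => decide (p t = b)
  set str := initSeg (join f (extendByFiber [] p b)) (2 * L)
  -- beyond every position read by `certify`
  set m := 2 * K + 2 * L + 4 * Nat.pair (encode (initSeg f K)) L + 4 * Nat.pair (encode str) 0 + 4
  set ρ := initSeg (join f (join Φ.graph Ψ.graph)) m
  have hσ : σ.length = L := by simp [σ]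
  have hread : ∀ i < m, ρ.getD i 0 = join f (join Φ.graph Ψ.graph) i :=
    fun i hi => by rw [getD_initSeg, if_pos hi]
  have houtput : outputQuery ρ σ = y + 1 := by
    have hstring : initSeg (join (evens ρ) (bits σ)) (2 * σ.length) = str := by
      rw [hσ]
      refine initSeg_congr (join_congr (k := L) (fun t ht => ?_) fun t ht => ?_)
      · exact evens_initSeg_join (by omega)
      simp [σ, bits, extendByFiber, ht]
    rw [outputQuery, hstring, hread _ (by omega), join_two_mul_add_one, join_two_mul_add_one,
      Functional.graph_pair_eq_succ_iff]
    exact Functional.eval_initSeg_of_le hL (by omega)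
  have hcolour : ∀ i < L, σ.getD i false = true → colourQuery ρ K i = b + 1 := by
    intro i hi hσi
    have : Nat.pair (encode (initSeg f K)) i < Nat.pair (encode (initSeg f K)) L :=
      Nat.pair_lt_pair_right _ hi
    rw [colourQuery, initSeg_evens_initSeg_join (by omega), hread _ (by omega),
      join_two_mul_add_one, join_two_mul, Functional.graph_pair_eq_succ_iff, hK i hi]
    simpa [σ, hi] using hσi
  refine ⟨m, (σ, K, b), y, ?_⟩
  rw [certify, if_pos, houtput]
  · rfl
  · simp only [ρ, length_initSeg, hσ, houtput]
    exact ⟨by omega, by omega, by omega, hcolour⟩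

end TS13

theorem FOPart_TS13_unifCompTrue : UnifCompTrue (FOPart TS13) := by
  refine ⟨searchFunctional TS13.certify TS13.primrec₂_certify, ?_⟩
  rintro _ ⟨f, Φ, Ψ, rfl, p, hΦ, hp, hΨ⟩
  obtain ⟨m, w, y, hw⟩ := TS13.exists_certify hΦ hp hΨ
  obtain ⟨_, _, y', hw', htotal⟩ := searchFunctional_total TS13.primrec₂_certify hw
  exact ⟨natSeq y', htotal, TS13.natSeq_mem_sol_of_certify hΦ hp hw'⟩
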